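/- arXiv:2507.17084 — 4 statements merged into one kernel-verified Lean document; each statement's English description precedes it below -/
import Mathlib

section
/- For every simple graph G on a finite vertex set of size n with m edges, the number of triangles (3-cliques) of G plus the number of triangles of the complement of G equals C(n,3) − (n−2)·m + Σ_v C(d(v),2), where the sum runs over all vertices v and d(v) denotes the degree of v in G (the identity being understood in the integers). -/
/-!
Call a centre `v ∈ S` together with a `k`-set of its neighbours inside `S` a `k`-star in `S`.
In a 3-set `S` spanning `e` edges there are `2e` one-stars and `C(e, 2)` two-stars, and
`[e = 3] + [e = 0] = 1 - e + C(e, 2)` for `0 ≤ e ≤ 3`. Summing this over all 3-sets, a `k`-star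
of `G` lies in exactly `C(n - k - 1, 2 - k)` of them, so the 1-stars (`2m` of them) contribute
`2m (n - 2)` and the 2-stars (`∑_v C(d(v), 2)` of them) contribute once each.
-/

open Finset

theorem Finset.sum_card_filter_subset_powersetCard {α ι : Type*} [DecidableEq α]
    {U : Finset α} {T : Finset ι} {g : ι → Finset α} {k r : ℕ}
    (hgU : ∀ x ∈ T, g x ⊆ U) (hg : ∀ x ∈ T, #(g x) = k) (hkr : k ≤ r) :
    ∑ S ∈ U.powersetCard r, #{x ∈ T | g x ⊆ S} = #T * (#U - k).choose (r - k) :=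
  calc ∑ S ∈ U.powersetCard r, #{x ∈ T | g x ⊆ S}
      = ∑ x ∈ T, #{S ∈ U.powersetCard r | g x ⊆ S} :=
        sum_card_bipartiteAbove_eq_sum_card_bipartiteBelow (r := fun S x => g x ⊆ S)
    _ = ∑ _x ∈ T, (#U - k).choose (r - k) := sum_congr rfl fun x hx => by
        rw [card_filter_powersetCard_subset _ _ _ (hgU x hx) (hg x hx ▸ hkr), hg x hx]
    _ = #T * (#U - k).choose (r - k) := sum_const_nat fun _ _ => rfl

namespace SimpleGraph

variable {V : Type*} (G : SimpleGraph V) [DecidableRel G.Adj]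

def starsIn (k : ℕ) (S : Finset V) : Finset (Σ _ : V, Finset V) :=
  S.sigma fun v => {w ∈ S | G.Adj v w}.powersetCard k

theorem card_starsIn (k : ℕ) (S : Finset V) :
    #(G.starsIn k S) = ∑ v ∈ S, (#{w ∈ S | G.Adj v w}).choose k := by
  simp [starsIn]

theorem card_starsIn_univ [Fintype V] (k : ℕ) :
    #(G.starsIn k univ) = ∑ v, (G.degree v).choose k := by
  simp [card_starsIn, ← neighborFinset_eq_filter]

theorem card_edgeFinset_mul_natCast_sub_two [Fintype V] :
    (#G.edgeFinset : ℤ) * ((Fintype.card V - 2 : ℕ) : ℤ)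
      = #G.edgeFinset * ((Fintype.card V : ℤ) - 2) := by
  rcases le_or_gt 2 (Fintype.card V) with h | h
  · rw [Nat.cast_sub h, Nat.cast_two]
  · have hm := G.card_edgeFinset_le_card_choose_two
    rw [Nat.choose_eq_zero_of_lt h, Nat.le_zero] at hm
    simp [hm]

variable [DecidableEq V]

theorem starsIn_eq_filter {k : ℕ} {S U : Finset V} (hSU : S ⊆ U) :
    G.starsIn k S = {x ∈ G.starsIn k U | insert x.1 x.2 ⊆ S} := by
  ext ⟨v, P⟩
  simp only [starsIn, mem_filter, mem_sigma, mem_powersetCard, subset_iff]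
  grind

theorem card_insert_of_mem_starsIn {k : ℕ} {S : Finset V} {x : Σ _ : V, Finset V}
    (hx : x ∈ G.starsIn k S) : #(insert x.1 x.2) = k + 1 := by
  simp only [starsIn, mem_sigma, mem_powersetCard, subset_iff, mem_filter] at hx
  rw [card_insert_of_notMem fun h => G.irrefl (hx.2.1 h).2, hx.2.2]

theorem sum_card_starsIn_powersetCard {k r : ℕ} (U : Finset V) (hkr : k + 1 ≤ r) :
    ∑ S ∈ U.powersetCard r, #(G.starsIn k S)
      = #(G.starsIn k U) * (#U - (k + 1)).choose (r - (k + 1)) := by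
  rw [← sum_card_filter_subset_powersetCard (g := fun x => insert x.1 x.2) _
    (fun x => G.card_insert_of_mem_starsIn) hkr]
  · exact sum_congr rfl fun S hS => by rw [G.starsIn_eq_filter (mem_powersetCard.1 hS).1]
  · intro x hx
    simp only [starsIn, mem_sigma, mem_powersetCard, subset_iff, mem_filter] at hx
    grind

theorem two_mul_clique_indicators_add_card_starsIn_one {S : Finset V} (hS : #S = 3) :
    2 * ((if G.IsNClique 3 S then 1 else 0) + (if Gᶜ.IsNClique 3 S then 1 else 0))
      + #(G.starsIn 1 S) = 2 + 2 * #(G.starsIn 2 S) := by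
  obtain ⟨a, b, c, hab, hac, hbc, rfl⟩ := card_eq_three.1 hS
  simp only [card_starsIn, is3Clique_triple_iff, compl_adj]
  by_cases h1 : G.Adj a b <;> by_cases h2 : G.Adj a c <;> by_cases h3 : G.Adj b c <;>
    simp [filter_insert, filter_singleton, hab, hac, hbc, h1, h2, h3, G.adj_comm b a,
      G.adj_comm c a, G.adj_comm c b]

theorem sum_powersetCard_indicator_isNClique [Fintype V] (n : ℕ) :
    ∑ S ∈ univ.powersetCard n, (if G.IsNClique n S then 1 else 0) = #(G.cliqueFinset n) := by
  rw [sum_boole, Nat.cast_id]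
  congr 1
  ext S
  simp [mem_cliqueFinset_iff, isNClique_iff]

end SimpleGraph

open SimpleGraph in
/-- Goodman's formula: for a simple graph `G` on `n` vertices with `m` edges,
`t(G) + t(Gᶜ) = C(n,3) - (n-2)·m + ∑_v C(d(v),2)`, as an identity in `ℤ`. -/
theorem goodman_formula {V : Type*} [Fintype V] [DecidableEq V]
    (G : SimpleGraph V) [DecidableRel G.Adj] :
    ((G.cliqueFinset 3).card : ℤ) + ((Gᶜ.cliqueFinset 3).card : ℤ) =
      ((Fintype.card V).choose 3 : ℤ)
        - ((Fintype.card V : ℤ) - 2) * (G.edgeFinset.card : ℤ)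
        + ∑ v : V, ((G.degree v).choose 2 : ℤ) := by
  have hcount : 2 * (#(G.cliqueFinset 3) + #(Gᶜ.cliqueFinset 3))
      + 2 * #G.edgeFinset * (Fintype.card V - 2)
      = (Fintype.card V).choose 3 * 2 + 2 * ∑ v, (G.degree v).choose 2 := by
    have hsum := sum_congr (s₁ := univ.powersetCard 3) rfl fun S hS =>
      G.two_mul_clique_indicators_add_card_starsIn_one (mem_powersetCard.1 hS).2
    rw [sum_add_distrib, ← mul_sum, sum_add_distrib, sum_powersetCard_indicator_isNClique,
      sum_powersetCard_indicator_isNClique,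
      G.sum_card_starsIn_powersetCard (k := 1) (r := 3) univ (by norm_num), sum_add_distrib,
      ← mul_sum, G.sum_card_starsIn_powersetCard (k := 2) (r := 3) univ le_rfl,
      card_starsIn_univ, card_starsIn_univ, sum_const, card_powersetCard, card_univ] at hsum
    simpa [Nat.choose_one_right, sum_degrees_eq_twice_card_edges] using hsum
  have hm := G.card_edgeFinset_mul_natCast_sub_two
  zify at hcount
  linarith
end

section
/- If G is a simple graph on 12 vertices with exactly 30 edges, then t(G) + t(complement of G) + 80 = Σ_v C(d(v),2), where the sum runs over all 12 vertices and d(v) denotes the degree of v in G. -/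
/-!
For three distinct vertices spanning `e` edges of `G`, one checks for `e = 0, 1, 2, 3` that
`[e = 3] + [e = 0] + e = 1 + c`, where `c` is the number of the three vertices adjacent to the
other two. Summing over ordered triples of distinct vertices counts every triangle of `G` or `Gᶜ`
six times, every edge `2 (n - 2)` times and every vertex `v` as a centre `2 C(d(v), 2)` times, which
gives Goodman's identity `t(G) + t(Gᶜ) + (n - 2) m = C(n, 3) + ∑ C(d(v), 2)`.
For `n = 12` and `m = 30` this is `t(G) + t(Gᶜ) + 300 = 220 + ∑ C(d(v), 2)`.
-/

open Finset

namespace Finset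

variable {α : Type*} [DecidableEq α]

def distinctTriples (s : Finset α) : Finset (α × α × α) :=
  {p ∈ s ×ˢ s ×ˢ s | p.1 ≠ p.2.1 ∧ p.1 ≠ p.2.2 ∧ p.2.1 ≠ p.2.2}

lemma card_distinctTriples_triple {a b c : α} (hab : a ≠ b) (hac : a ≠ c) (hbc : b ≠ c) :
    #(distinctTriples {a, b, c}) = 6 := by
  rw [distinctTriples, card_filter]
  simp (disch := simp [*]) only [sum_product, sum_insert, sum_singleton]
  simp [hab, hac, hbc, hab.symm, hac.symm, hbc.symm]

end Finset

namespace SimpleGraph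

variable {V : Type*} [Fintype V] [DecidableEq V]

lemma cliqueFinset_top (k : ℕ) :
    (⊤ : SimpleGraph V).cliqueFinset k = powersetCard k univ := by
  ext s
  simp [mem_cliqueFinset_iff, isNClique_iff, IsClique.top]

variable (G : SimpleGraph V) [DecidableRel G.Adj]

def triangleTriples : Finset (V × V × V) :=
  {p | G.Adj p.1 p.2.1 ∧ G.Adj p.1 p.2.2 ∧ G.Adj p.2.1 p.2.2}

def edgeTriples : Finset (V × V × V) :=
  {p | p.1 ≠ p.2.2 ∧ p.2.1 ≠ p.2.2 ∧ G.Adj p.1 p.2.1}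

def cherryTriples : Finset (V × V × V) :=
  {p | p.2.1 ≠ p.2.2 ∧ G.Adj p.1 p.2.1 ∧ G.Adj p.1 p.2.2}

lemma filter_triangleTriples_eq_distinctTriples {s : Finset V} (hs : G.IsNClique 3 s) :
    {p ∈ G.triangleTriples | {p.1, p.2.1, p.2.2} = s} = s.distinctTriples := by
  ext ⟨x, y, z⟩
  simp only [triangleTriples, distinctTriples, mem_filter, mem_univ, true_and, mem_product]
  constructor
  · rintro ⟨⟨hxy, hxz, hyz⟩, rfl⟩
    simp [hxy.ne, hxz.ne, hyz.ne]
  · rintro ⟨⟨hx, hy, hz⟩, hxy, hxz, hyz⟩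
    refine ⟨⟨hs.1 hx hy hxy, hs.1 hx hz hxz, hs.1 hy hz hyz⟩, ?_⟩
    refine eq_of_subset_of_card_le (by simp [insert_subset_iff, *]) ?_
    rw [hs.card_eq, card_insert_of_notMem (by simp [hxy, hxz]), card_pair hyz]

lemma card_triangleTriples : #G.triangleTriples = 6 * #(G.cliqueFinset 3) := by
  have hmaps : (G.triangleTriples : Set (V × V × V)).MapsTo
      (fun p ↦ ({p.1, p.2.1, p.2.2} : Finset V)) (G.cliqueFinset 3) := by
    rintro ⟨x, y, z⟩ h
    simpa [triangleTriples, is3Clique_triple_iff] using h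
  rw [card_eq_sum_card_fiberwise hmaps, sum_const_nat, mul_comm]
  intro s hs
  rw [mem_cliqueFinset_iff] at hs
  obtain ⟨a, b, c, hab, hac, hbc, rfl⟩ := card_eq_three.1 hs.card_eq
  rw [filter_triangleTriples_eq_distinctTriples G hs, card_distinctTriples_triple hab hac hbc]

lemma card_edgeTriples : #G.edgeTriples = 2 * #G.edgeFinset * (Fintype.card V - 2) := by
  have hthird : ∀ a b : V, a ≠ b → #{c | a ≠ c ∧ b ≠ c} = Fintype.card V - 2 := by
    intro a b hab
    rw [← card_pair hab, ← card_compl]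
    congr 1
    ext c
    simp [eq_comm]
  rw [← sum_degrees_eq_twice_card_edges, sum_mul, edgeTriples, card_filter, Fintype.sum_prod_type]
  refine sum_congr rfl fun a _ ↦ ?_
  rw [Fintype.sum_prod_type, ← card_neighborFinset_eq_degree, card_eq_sum_ones, sum_mul,
    neighborFinset_eq_filter, sum_filter]
  refine sum_congr rfl fun b _ ↦ ?_
  by_cases hab : G.Adj a b
  · simp only [hab, and_true, if_true, one_mul, ← hthird a b hab.ne, card_filter]
  · simp [hab]

lemma card_cherryTriples : #G.cherryTriples = 2 * ∑ v, (G.degree v).choose 2 := by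
  rw [mul_sum, cherryTriples, card_filter, Fintype.sum_prod_type]
  refine sum_congr rfl fun a _ ↦ ?_
  rw [Nat.choose_two_right, Nat.mul_div_cancel' (Nat.even_mul_pred_self _).two_dvd,
    ← card_neighborFinset_eq_degree, mul_tsub, mul_one, ← offDiag_card, ← card_filter]
  congr 1
  ext ⟨b, c⟩
  simp [and_comm, and_left_comm]

lemma card_triangleTriples_add_card_compl_triangleTriples :
    #G.triangleTriples + #Gᶜ.triangleTriples + 3 * #G.edgeTriples =
      #(⊤ : SimpleGraph V).triangleTriples + 3 * #G.cherryTriples := by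
  -- `ρ` rotates `(a, b, c)` to `(b, c, a)`. The three rotations of a triple bring each of its pairs
  -- to the first two positions, read by `edgeTriples`, and each vertex to the first, read by
  -- `cherryTriples`.
  let ρ : (V × V × V) ≃ (V × V × V) := (Equiv.prodComm V (V × V)).trans (Equiv.prodAssoc V V V)
  have hrotate (σ : (V × V × V) ≃ (V × V × V)) (s : Finset (V × V × V)) :
      #{p | σ p ∈ s} = #s := by
    simpa using Equiv.sum_comp σ (fun p ↦ if p ∈ s then (1 : ℕ) else 0)
  have hpoint : ∀ p : V × V × V,
      (if p ∈ G.triangleTriples then 1 else 0) + (if p ∈ Gᶜ.triangleTriples then 1 else 0) +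
        ((if p ∈ G.edgeTriples then 1 else 0) + (if ρ p ∈ G.edgeTriples then 1 else 0) +
          (if ρ.symm p ∈ G.edgeTriples then 1 else 0)) =
      (if p ∈ (⊤ : SimpleGraph V).triangleTriples then 1 else 0) +
        ((if p ∈ G.cherryTriples then 1 else 0) + (if ρ p ∈ G.cherryTriples then 1 else 0) +
          (if ρ.symm p ∈ G.cherryTriples then 1 else 0)) := by
    rintro ⟨a, b, c⟩
    simp only [triangleTriples, edgeTriples, cherryTriples, mem_filter, mem_univ, true_and,
      compl_adj, top_adj, ρ, Equiv.trans_apply, Equiv.symm_trans_apply, Equiv.prodComm_apply,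
      Equiv.prodAssoc_apply, Equiv.prodComm_symm, Equiv.prodAssoc_symm_apply, Prod.swap]
    by_cases hab : a = b
    · subst hab; simp
    by_cases hac : a = c
    · subst hac; simp [hab]
    by_cases hbc : b = c
    · subst hbc; simp [hab]
    by_cases h1 : G.Adj a b <;> by_cases h2 : G.Adj a c <;> by_cases h3 : G.Adj b c <;>
      simp [*, G.adj_comm b a, G.adj_comm c a, G.adj_comm c b, eq_comm]
  have hsum := sum_congr rfl fun p (_ : p ∈ univ) ↦ hpoint p
  simp only [sum_add_distrib, sum_boole, Nat.cast_id, filter_mem_eq_inter, univ_inter,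
    hrotate] at hsum
  omega

theorem goodman_identity :
    #(G.cliqueFinset 3) + #(Gᶜ.cliqueFinset 3) + (Fintype.card V - 2) * #G.edgeFinset =
      (Fintype.card V).choose 3 + ∑ v, (G.degree v).choose 2 := by
  have h := G.card_triangleTriples_add_card_compl_triangleTriples
  rw [card_triangleTriples, card_triangleTriples, card_triangleTriples, cliqueFinset_top,
    card_powersetCard, card_univ, card_edgeTriples, card_cherryTriples] at h
  linarith

end SimpleGraph

/-- For a simple graph `G` on 12 vertices with exactly 30 edges,
`t(G) + t(Gᶜ) + 80 = ∑_v C(d(v), 2)`. -/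
theorem goodman_twelve {V : Type*} [Fintype V] [DecidableEq V]
    (hV : Fintype.card V = 12)
    (G : SimpleGraph V) [DecidableRel G.Adj]
    (hm : G.edgeFinset.card = 30) :
    (G.cliqueFinset 3).card + (Gᶜ.cliqueFinset 3).card + 80 =
      ∑ v : V, (G.degree v).choose 2 := by
  have h := G.goodman_identity
  rw [hV, hm] at h
  norm_num [Nat.choose] at h
  omega
end

section
/- If G is a simple graph on 12 vertices in which every vertex has degree 5, then t(G) + t(complement of G) = 40. -/
open Finset

section aux
variable {V : Type*} [Fintype V] [DecidableEq V] (G : SimpleGraph V) [DecidableRel G.Adj]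

/-- the cherry predicate -/
private def Pch (p : V × V × V) : Prop :=
  G.Adj p.1 p.2.1 ∧ ¬ G.Adj p.1 p.2.2 ∧ p.1 ≠ p.2.2

private instance : DecidablePred (Pch G) := fun p => by unfold Pch; infer_instance

private lemma cherry_two_edges {a b c : V} (hab : G.Adj a b) (hac : G.Adj a c)
    (hbc : ¬ G.Adj b c) (hbc' : b ≠ c) :
    (((({a,b,c} : Finset V)) ×ˢ ({a,b,c} : Finset V) ×ˢ ({a,b,c} : Finset V)).filter
      (Pch G)).card = 2 := by
  have hba := hab.symm
  have hca := hac.symm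
  have hcb : ¬ G.Adj c b := fun h => hbc h.symm
  have hab' := hab.ne
  have hac' := hac.ne
  have hab'' := hab'.symm
  have hac'' := hac'.symm
  have hbc'' := hbc'.symm
  have h : ((({a,b,c} : Finset V)) ×ˢ ({a,b,c} : Finset V) ×ˢ ({a,b,c} : Finset V)).filter
      (Pch G) = {(b,a,c), (c,a,b)} := by
    ext ⟨x, y, z⟩
    simp only [mem_filter, mem_product, mem_insert, mem_singleton, Pch, Prod.mk.injEq]
    constructor
    · rintro ⟨⟨hx, hy, hz⟩, h1, h2, h3⟩
      rcases hx with rfl|rfl|rfl <;> rcases hy with rfl|rfl|rfl <;>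
        rcases hz with rfl|rfl|rfl <;> simp_all [SimpleGraph.irrefl]
    · rintro (⟨rfl,rfl,rfl⟩|⟨rfl,rfl,rfl⟩) <;> simp_all [SimpleGraph.irrefl]
  rw [h]
  rw [card_insert_of_notMem (by simp [hbc']), card_singleton]

private lemma cherry_one_edge {a b c : V} (hab : G.Adj a b) (hac : ¬ G.Adj a c)
    (hbc : ¬ G.Adj b c) (hac' : a ≠ c) (hbc' : b ≠ c) :
    (((({a,b,c} : Finset V)) ×ˢ ({a,b,c} : Finset V) ×ˢ ({a,b,c} : Finset V)).filter
      (Pch G)).card = 2 := by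
  have hba := hab.symm
  have hca : ¬ G.Adj c a := fun h => hac h.symm
  have hcb : ¬ G.Adj c b := fun h => hbc h.symm
  have hab' := hab.ne
  have hab'' := hab'.symm
  have hac'' := hac'.symm
  have hbc'' := hbc'.symm
  have h : ((({a,b,c} : Finset V)) ×ˢ ({a,b,c} : Finset V) ×ˢ ({a,b,c} : Finset V)).filter
      (Pch G) = {(a,b,c), (b,a,c)} := by
    ext ⟨x, y, z⟩
    simp only [mem_filter, mem_product, mem_insert, mem_singleton, Pch, Prod.mk.injEq]
    constructor
    · rintro ⟨⟨hx, hy, hz⟩, h1, h2, h3⟩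
      rcases hx with rfl|rfl|rfl <;> rcases hy with rfl|rfl|rfl <;>
        rcases hz with rfl|rfl|rfl <;> simp_all [SimpleGraph.irrefl]
    · rintro (⟨rfl,rfl,rfl⟩|⟨rfl,rfl,rfl⟩) <;> simp_all [SimpleGraph.irrefl]
  rw [h]
  rw [card_insert_of_notMem (by simp [hab'.symm]), card_singleton]

private lemma cherry_all {a b c : V} (hab : G.Adj a b) (hac : G.Adj a c) (hbc : G.Adj b c) :
    (((({a,b,c} : Finset V)) ×ˢ ({a,b,c} : Finset V) ×ˢ ({a,b,c} : Finset V)).filter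
      (Pch G)).card = 0 := by
  have hba := hab.symm
  have hca := hac.symm
  have hcb := hbc.symm
  rw [card_eq_zero, filter_eq_empty_iff]
  rintro ⟨x, y, z⟩ hm
  simp only [mem_product, mem_insert, mem_singleton] at hm
  obtain ⟨hx, hy, hz⟩ := hm
  rintro ⟨h1, h2, h3⟩
  rcases hx with rfl|rfl|rfl <;> rcases hz with rfl|rfl|rfl <;>
    simp_all [SimpleGraph.irrefl]

private lemma cherry_none {a b c : V} (hab : ¬ G.Adj a b) (hac : ¬ G.Adj a c)
    (hbc : ¬ G.Adj b c) :
    (((({a,b,c} : Finset V)) ×ˢ ({a,b,c} : Finset V) ×ˢ ({a,b,c} : Finset V)).filter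
      (Pch G)).card = 0 := by
  have hba : ¬ G.Adj b a := fun h => hab h.symm
  have hca : ¬ G.Adj c a := fun h => hac h.symm
  have hcb : ¬ G.Adj c b := fun h => hbc h.symm
  rw [card_eq_zero, filter_eq_empty_iff]
  rintro ⟨x, y, z⟩ hm
  simp only [mem_product, mem_insert, mem_singleton] at hm
  obtain ⟨hx, hy, hz⟩ := hm
  rintro ⟨h1, h2, h3⟩
  rcases hx with rfl|rfl|rfl <;> rcases hy with rfl|rfl|rfl <;>
    simp_all [SimpleGraph.irrefl]

end aux

set_option maxHeartbeats 1600000 in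
/-- If `G` is a simple graph on 12 vertices in which every vertex has degree 5,
then `t(G) + t(Gᶜ) = 40`. -/
theorem triangles_of_five_regular_twelve {V : Type*} [Fintype V] [DecidableEq V]
    (hV : Fintype.card V = 12)
    (G : SimpleGraph V) [DecidableRel G.Adj]
    (hdeg : ∀ v : V, G.degree v = 5) :
    (G.cliqueFinset 3).card + (Gᶜ.cliqueFinset 3).card = 40 := by
  classical
  set T : Finset (Finset V) := (univ : Finset V).powersetCard 3 with hT
  have hTcard : T.card = 220 := by
    rw [hT, card_powersetCard, card_univ, hV]; decide
  set C : Finset (V × V × V) := (univ : Finset (V × V × V)).filter (Pch G) with hC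
  -- Step A : C.card = 360
  have hA : C.card = 360 := by
    have := card_eq_sum_card_fiberwise (f := fun p : V × V × V => p.1)
      (s := C) (t := (univ : Finset V)) (fun p _ => mem_univ _)
    rw [this]
    have hfib : ∀ v : V, (C.filter fun p => p.1 = v).card = 30 := by
      intro v
      have hveq : (C.filter fun p => p.1 = v) =
          ({v} : Finset V) ×ˢ (G.neighborFinset v ×ˢ ((G.neighborFinset v)ᶜ.erase v)) := by
        ext ⟨x, y, z⟩
        simp only [hC, mem_filter, mem_univ, true_and, Pch, mem_product, mem_singleton,
          SimpleGraph.mem_neighborFinset, mem_erase, mem_compl]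
        constructor
        · rintro ⟨⟨h1, h2, h3⟩, rfl⟩
          exact ⟨rfl, h1, fun h => h3 h.symm, h2⟩
        · rintro ⟨rfl, h1, h2, h3⟩
          exact ⟨⟨h1, h3, fun h => h2 h.symm⟩, rfl⟩
      rw [hveq, card_product, card_product, card_singleton, one_mul,
        SimpleGraph.card_neighborFinset_eq_degree, hdeg]
      have hvmem : v ∈ (G.neighborFinset v)ᶜ := by
        simp [SimpleGraph.mem_neighborFinset]
      rw [card_erase_of_mem hvmem, card_compl, SimpleGraph.card_neighborFinset_eq_degree,
        hdeg, hV]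
    rw [sum_congr rfl fun v _ => hfib v, sum_const, card_univ, hV]; rfl
  -- Step B : fiberwise over triples
  have hmapsto : ∀ p ∈ C, ({p.1, p.2.1, p.2.2} : Finset V) ∈ T := by
    rintro ⟨x, y, z⟩ hp
    simp only [hC, mem_filter, Pch, mem_univ, true_and] at hp
    obtain ⟨h1, h2, h3⟩ := hp
    have hxy : x ≠ y := h1.ne
    have hyz : y ≠ z := fun h => h2 (h ▸ h1)
    rw [hT, mem_powersetCard]
    refine ⟨subset_univ _, ?_⟩
    rw [card_insert_of_notMem (by simp [hxy, h3]), card_insert_of_notMem (by simp [hyz]),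
      card_singleton]
  have hB : C.card = ∑ s ∈ T, (C.filter fun p => ({p.1, p.2.1, p.2.2} : Finset V) = s).card :=
    card_eq_sum_card_fiberwise hmapsto
  -- Step C : per triple
  have hfibeq : ∀ s ∈ T, (C.filter fun p => ({p.1, p.2.1, p.2.2} : Finset V) = s) =
      (s ×ˢ s ×ˢ s).filter (Pch G) := by
    intro s hs
    have hscard : s.card = 3 := (mem_powersetCard.1 hs).2
    ext ⟨x, y, z⟩
    simp only [hC, mem_filter, mem_univ, true_and, mem_product]
    constructor
    · rintro ⟨hp, rfl⟩
      refine ⟨⟨?_, ?_, ?_⟩, hp⟩ <;> simp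
    · rintro ⟨⟨hx, hy, hz⟩, hp⟩
      refine ⟨hp, ?_⟩
      obtain ⟨h1, h2, h3⟩ := hp
      have hxy : x ≠ y := h1.ne
      have hyz : y ≠ z := fun h => h2 (h ▸ h1)
      have hsub : ({x, y, z} : Finset V) ⊆ s := by
        intro w hw
        simp only [mem_insert, mem_singleton] at hw
        rcases hw with rfl|rfl|rfl <;> assumption
      have hcard : ({x, y, z} : Finset V).card = 3 := by
        rw [card_insert_of_notMem (by simp [hxy, h3]),
          card_insert_of_notMem (by simp [hyz]), card_singleton]
      exact Finset.eq_of_subset_of_card_le hsub (by omega)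
  have hCstep : ∀ s ∈ T,
      ((s ×ˢ s ×ˢ s).filter (Pch G)).card
        + 2 * ((if s ∈ G.cliqueFinset 3 then 1 else 0)
          + (if s ∈ Gᶜ.cliqueFinset 3 then 1 else 0)) = 2 := by
    intro s hs
    have hscard : s.card = 3 := (mem_powersetCard.1 hs).2
    obtain ⟨a, b, c, hab', hac', hbc', rfl⟩ := Finset.card_eq_three.1 hscard
    have hG : (({a,b,c} : Finset V) ∈ G.cliqueFinset 3) ↔
        (G.Adj a b ∧ G.Adj a c ∧ G.Adj b c) := by
      rw [SimpleGraph.mem_cliqueFinset_iff, SimpleGraph.is3Clique_triple_iff]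
    have hGc : (({a,b,c} : Finset V) ∈ Gᶜ.cliqueFinset 3) ↔
        (¬G.Adj a b ∧ ¬G.Adj a c ∧ ¬G.Adj b c) := by
      rw [SimpleGraph.mem_cliqueFinset_iff, SimpleGraph.is3Clique_triple_iff]
      simp [SimpleGraph.compl_adj, hab', hac', hbc']
    by_cases hab : G.Adj a b <;> by_cases hac : G.Adj a c <;> by_cases hbc : G.Adj b c
    · have hch := cherry_all G hab hac hbc
      simp [hch, hG, hGc, hab, hac, hbc]
    · have hch := cherry_two_edges G hab hac hbc hbc'
      simp [hch, hG, hGc, hab, hac, hbc]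
    · have hset : ({a, b, c} : Finset V) = ({b, a, c} : Finset V) := by
        ext x; simp; tauto
      have hch : (((({a,b,c} : Finset V)) ×ˢ ({a,b,c} : Finset V) ×ˢ
          ({a,b,c} : Finset V)).filter (Pch G)).card = 2 := by
        rw [hset]; exact cherry_two_edges G hab.symm hbc hac hac'
      simp [hch, hG, hGc, hab, hac, hbc]
    · have hch := cherry_one_edge G hab hac hbc hac' hbc'
      simp [hch, hG, hGc, hab, hac, hbc]
    · have hset : ({a, b, c} : Finset V) = ({c, a, b} : Finset V) := by
        ext x; simp; tauto
      have hch : (((({a,b,c} : Finset V)) ×ˢ ({a,b,c} : Finset V) ×ˢ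
          ({a,b,c} : Finset V)).filter (Pch G)).card = 2 := by
        rw [hset]; exact cherry_two_edges G hac.symm hbc.symm hab hab'
      simp [hch, hG, hGc, hab, hac, hbc]
    · have hset : ({a, b, c} : Finset V) = ({a, c, b} : Finset V) := by
        ext x; simp; tauto
      have hch : (((({a,b,c} : Finset V)) ×ˢ ({a,b,c} : Finset V) ×ˢ
          ({a,b,c} : Finset V)).filter (Pch G)).card = 2 := by
        rw [hset]
        exact cherry_one_edge G hac hab (fun h => hbc h.symm) hab' hbc'.symm
      simp [hch, hG, hGc, hab, hac, hbc]
    · have hset : ({a, b, c} : Finset V) = ({b, c, a} : Finset V) := by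
        ext x; simp; tauto
      have hch : (((({a,b,c} : Finset V)) ×ˢ ({a,b,c} : Finset V) ×ˢ
          ({a,b,c} : Finset V)).filter (Pch G)).card = 2 := by
        rw [hset]
        exact cherry_one_edge G hbc (fun h => hab h.symm) (fun h => hac h.symm)
          hab'.symm hac'.symm
      simp [hch, hG, hGc, hab, hac, hbc]
    · have hch := cherry_none G hab hac hbc
      simp [hch, hG, hGc, hab, hac, hbc]
  -- sum it all up
  have hsum : ∑ s ∈ T, (((s ×ˢ s ×ˢ s).filter (Pch G)).card
        + 2 * ((if s ∈ G.cliqueFinset 3 then 1 else 0)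
          + (if s ∈ Gᶜ.cliqueFinset 3 then 1 else 0))) = 2 * T.card := by
    rw [sum_congr rfl hCstep, sum_const, smul_eq_mul, mul_comm]
  have hfib360 : ∑ s ∈ T, ((s ×ˢ s ×ˢ s).filter (Pch G)).card = 360 := by
    rw [← hA, hB]
    exact sum_congr rfl fun s hs => by rw [hfibeq s hs]
  rw [sum_add_distrib, hfib360, ← mul_sum, sum_add_distrib] at hsum
  have hsubG : G.cliqueFinset 3 ⊆ T := by
    intro s hs
    rw [hT, mem_powersetCard]
    exact ⟨subset_univ _, (SimpleGraph.mem_cliqueFinset_iff.1 hs).2⟩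
  have hsubGc : Gᶜ.cliqueFinset 3 ⊆ T := by
    intro s hs
    rw [hT, mem_powersetCard]
    exact ⟨subset_univ _, (SimpleGraph.mem_cliqueFinset_iff.1 hs).2⟩
  have hcount : ∀ (A : Finset (Finset V)), A ⊆ T →
      ∑ s ∈ T, (if s ∈ A then 1 else 0) = A.card := by
    intro A hA'
    rw [Finset.sum_ite_mem, Finset.sum_const, smul_eq_mul, mul_one,
      Finset.inter_eq_right.mpr hA']
  rw [hcount _ hsubG, hcount _ hsubGc, hTcard] at hsum
  omega
end

section
/- If G is a simple graph on 12 vertices with exactly 30 edges such that t(G) ≥ 20 and t(complement of G) ≥ 24, then Σ_v C(d(v),2) ≥ 124, where the sum runs over all 12 vertices, d(v) denotes the degree of v in G, and C(a,2) is the binomial coefficient. -/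
open Finset

lemma card_superset_filter {α : Type*} [Fintype α] [DecidableEq α] (t : Finset α) (k : ℕ)
    (h : t.card ≤ k) :
    ((Finset.univ.powersetCard k).filter fun s => t ⊆ s).card
      = (Fintype.card α - t.card).choose (k - t.card) := by
  rw [← Finset.card_compl t, ← card_powersetCard]
  apply Finset.card_bij' (fun s _ => s \ t) (fun u _ => u ∪ t)
  · intro s hs
    simp only [mem_filter, mem_powersetCard] at hs ⊢
    obtain ⟨⟨-, hcard⟩, hts⟩ := hs
    refine ⟨fun x hx => ?_, ?_⟩
    · simp only [mem_sdiff] at hx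
      simpa using hx.2
    · rw [card_sdiff_of_subset hts, hcard]
  · intro u hu
    simp only [mem_powersetCard] at hu
    simp only [mem_filter, mem_powersetCard]
    have hdisj : Disjoint u t := by
      rw [Finset.disjoint_left]
      intro x hx
      have := hu.1 hx
      simpa using this
    refine ⟨⟨subset_univ _, ?_⟩, subset_union_right⟩
    rw [card_union_of_disjoint hdisj, hu.2, Nat.sub_add_cancel h]
  · intro s hs
    simp only [mem_filter] at hs
    exact sdiff_union_of_subset hs.2
  · intro u hu
    simp only [mem_powersetCard] at hu
    have hdisj : Disjoint u t := by
      rw [Finset.disjoint_left]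
      intro x hx
      have := hu.1 hx
      simpa using this
    rw [union_sdiff_right, sdiff_eq_self_of_disjoint hdisj]

lemma card_insert_filter {α : Type*} [Fintype α] [DecidableEq α] (v : α) (A : Finset α)
    (hv : v ∉ A) (k : ℕ) :
    ((Finset.univ.powersetCard (k+1)).filter fun s => v ∈ s ∧ s.erase v ⊆ A).card
      = A.card.choose k := by
  rw [← card_powersetCard]
  refine Finset.card_bij' (fun s _ => s.erase v) (fun u _ => insert v u) ?hi ?hj ?li ?ri
  case hi =>
    intro s hs
    simp only [mem_filter, mem_powersetCard] at hs
    obtain ⟨⟨-, hcard⟩, hvs, hsub⟩ := hs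
    simp only [mem_powersetCard]
    exact ⟨hsub, by rw [card_erase_of_mem hvs, hcard]; omega⟩
  case hj =>
    intro u hu
    simp only [mem_powersetCard] at hu
    have hvu : v ∉ u := fun h => hv (hu.1 h)
    simp only [mem_filter, mem_powersetCard]
    refine ⟨⟨subset_univ _, by rw [card_insert_of_notMem hvu, hu.2]⟩, mem_insert_self _ _, ?_⟩
    rw [erase_insert hvu]
    exact hu.1
  case li =>
    intro s hs
    simp only [mem_filter] at hs
    exact insert_erase hs.2.1
  case ri =>
    intro u hu
    simp only [mem_powersetCard] at hu
    exact erase_insert (fun h => hv (hu.1 h))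

/-- If `G` is a simple graph on 12 vertices with exactly 30 edges such that
`t(G) ≥ 20` and `t(Gᶜ) ≥ 24`, then `∑_v C(d(v), 2) ≥ 124`. -/
theorem degree_choose_two_sum_ge {V : Type*} [Fintype V] [DecidableEq V]
    (hV : Fintype.card V = 12)
    (G : SimpleGraph V) [DecidableRel G.Adj]
    (hm : G.edgeFinset.card = 30)
    (ht : 20 ≤ (G.cliqueFinset 3).card)
    (htc : 24 ≤ (Gᶜ.cliqueFinset 3).card) :
    124 ≤ ∑ v : V, (G.degree v).choose 2 := by
  classical
  set P3 : Finset (Finset V) := Finset.univ.powersetCard 3 with hP3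
  -- pointwise identity on triples
  have key : ∀ s ∈ P3,
      2 * (if G.IsNClique 3 s then 1 else 0) + 2 * (if Gᶜ.IsNClique 3 s then 1 else 0)
        + ∑ v ∈ s, ∑ w ∈ s, (if G.Adj v w then (1:ℕ) else 0)
      = 2 + 2 * ∑ v ∈ s, (if s.erase v ⊆ G.neighborFinset v then (1:ℕ) else 0) := by
    intro s hs
    obtain ⟨x, y, z, hxy, hxz, hyz, rfl⟩ :=
      Finset.card_eq_three.1 ((Finset.mem_powersetCard.1 hs).2)
    have hsum : ∀ f : V → ℕ, ∑ v ∈ ({x, y, z} : Finset V), f v = f x + (f y + f z) := by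
      intro f
      rw [Finset.sum_insert (by simp [hxy, hxz]), Finset.sum_pair hyz]
    have e1 : ({x, y, z} : Finset V).erase x = {y, z} :=
      Finset.erase_insert (by simp [hxy, hxz])
    have e2 : ({x, y, z} : Finset V).erase y = {x, z} := by
      ext a
      simp only [Finset.mem_erase, Finset.mem_insert, Finset.mem_singleton]
      constructor
      · rintro ⟨ha, rfl | rfl | rfl⟩
        · exact Or.inl rfl
        · exact absurd rfl ha
        · exact Or.inr rfl
      · rintro (rfl | rfl)
        · exact ⟨hxy, Or.inl rfl⟩
        · exact ⟨Ne.symm hyz, Or.inr (Or.inr rfl)⟩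
    have e3 : ({x, y, z} : Finset V).erase z = {x, y} := by
      ext a
      simp only [Finset.mem_erase, Finset.mem_insert, Finset.mem_singleton]
      constructor
      · rintro ⟨ha, rfl | rfl | rfl⟩
        · exact Or.inl rfl
        · exact Or.inr rfl
        · exact absurd rfl ha
      · rintro (rfl | rfl)
        · exact ⟨hxz, Or.inl rfl⟩
        · exact ⟨hyz, Or.inr (Or.inl rfl)⟩
    have nsub : ∀ u v w : V, (({v, w} : Finset V) ⊆ G.neighborFinset u)
        ↔ (G.Adj u v ∧ G.Adj u w) := by
      intro u v w; simp [Finset.insert_subset_iff]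
    have c1 : G.Adj y x ↔ G.Adj x y := G.adj_comm y x
    have c2 : G.Adj z x ↔ G.Adj x z := G.adj_comm z x
    have c3 : G.Adj z y ↔ G.Adj y z := G.adj_comm z y
    simp only [hsum, e1, e2, e3, nsub, SimpleGraph.is3Clique_triple_iff,
      SimpleGraph.compl_adj, c1, c2, c3, SimpleGraph.irrefl, hxy, hxz, hyz,
      Ne.symm hxy, Ne.symm hxz, Ne.symm hyz]
    by_cases h1 : G.Adj x y <;> by_cases h2 : G.Adj x z <;> by_cases h3 : G.Adj y z <;>
      simp [h1, h2, h3, hxy, hxz, hyz]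
  have main := Finset.sum_congr rfl key
  -- expansion helper
  have expand : ∀ (s : Finset V) (g : V → ℕ),
      ∑ v ∈ s, g v = ∑ v : V, if v ∈ s then g v else 0 := by
    intro s g
    rw [Finset.sum_ite_mem, Finset.univ_inter]
  -- sub-sum 1 : triangles of G
  have h1 : ∑ s ∈ P3, (if G.IsNClique 3 s then (1:ℕ) else 0) = (G.cliqueFinset 3).card := by
    rw [← Finset.card_filter]
    congr 1
    ext s
    simp only [Finset.mem_filter, Finset.mem_powersetCard, SimpleGraph.mem_cliqueFinset_iff, hP3]
    exact ⟨fun h => h.2, fun h => ⟨⟨Finset.subset_univ _, h.card_eq⟩, h⟩⟩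
  have h1c : ∑ s ∈ P3, (if Gᶜ.IsNClique 3 s then (1:ℕ) else 0) = (Gᶜ.cliqueFinset 3).card := by
    rw [← Finset.card_filter]
    congr 1
    ext s
    simp only [Finset.mem_filter, Finset.mem_powersetCard, SimpleGraph.mem_cliqueFinset_iff, hP3]
    exact ⟨fun h => h.2, fun h => ⟨⟨Finset.subset_univ _, h.card_eq⟩, h⟩⟩
  -- sub-sum 2 : edge counting
  have h2 : ∑ s ∈ P3, (∑ v ∈ s, ∑ w ∈ s, (if G.Adj v w then (1:ℕ) else 0)) = 600 := by
    have step1 : ∑ s ∈ P3, (∑ v ∈ s, ∑ w ∈ s, (if G.Adj v w then (1:ℕ) else 0))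
        = ∑ s ∈ P3, ∑ v : V, ∑ w : V, (if v ∈ s ∧ w ∈ s then (if G.Adj v w then (1:ℕ) else 0) else 0) := by
      refine Finset.sum_congr rfl fun s _ => ?_
      rw [expand]
      refine Finset.sum_congr rfl fun v _ => ?_
      by_cases hv : v ∈ s
      · simp only [hv, if_true, true_and]
        rw [expand]
      · simp [hv]
    rw [step1, Finset.sum_comm]
    have step2 : ∀ v : V, ∑ s ∈ P3, ∑ w : V, (if v ∈ s ∧ w ∈ s then (if G.Adj v w then (1:ℕ) else 0) else 0)
        = ∑ w : V, ∑ s ∈ P3, (if v ∈ s ∧ w ∈ s then (if G.Adj v w then (1:ℕ) else 0) else 0) :=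
      fun v => Finset.sum_comm
    simp only [step2]
    have step3 : ∀ v w : V, ∑ s ∈ P3, (if v ∈ s ∧ w ∈ s then (if G.Adj v w then (1:ℕ) else 0) else 0)
        = 10 * (if G.Adj v w then 1 else 0) := by
      intro v w
      by_cases hvw : v = w
      · subst hvw
        simp [SimpleGraph.irrefl]
      · have hfil : P3.filter (fun s => v ∈ s ∧ w ∈ s)
            = P3.filter (fun s => ({v, w} : Finset V) ⊆ s) := by
          apply Finset.filter_congr
          intro s _
          simp [Finset.insert_subset_iff]
        have hcard : (P3.filter (fun s => v ∈ s ∧ w ∈ s)).card = 10 := by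
          rw [hfil, hP3, card_superset_filter ({v, w} : Finset V) 3
            (by rw [Finset.card_pair hvw]; omega), Finset.card_pair hvw, hV]
          decide
        rw [← Finset.sum_filter, Finset.sum_const, hcard, smul_eq_mul]
    simp only [step3]
    have hdeg : ∀ v : V, ∑ w : V, (if G.Adj v w then (1:ℕ) else 0) = G.degree v := by
      intro v
      rw [← Finset.card_filter, ← SimpleGraph.neighborFinset_eq_filter,
        SimpleGraph.card_neighborFinset_eq_degree]
    calc ∑ v : V, ∑ w : V, 10 * (if G.Adj v w then (1:ℕ) else 0)
        = 10 * ∑ v : V, ∑ w : V, (if G.Adj v w then (1:ℕ) else 0) := by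
          rw [Finset.mul_sum]
          refine Finset.sum_congr rfl fun v _ => ?_
          rw [Finset.mul_sum]
      _ = 10 * ∑ v : V, G.degree v := by simp only [hdeg]
      _ = 600 := by rw [G.sum_degrees_eq_twice_card_edges, hm]
  -- sub-sum 3 : cherries
  have h3 : ∑ s ∈ P3, (∑ v ∈ s, (if s.erase v ⊆ G.neighborFinset v then (1:ℕ) else 0))
      = ∑ v : V, (G.degree v).choose 2 := by
    have step1 : ∑ s ∈ P3, (∑ v ∈ s, (if s.erase v ⊆ G.neighborFinset v then (1:ℕ) else 0))
        = ∑ s ∈ P3, ∑ v : V, (if v ∈ s ∧ s.erase v ⊆ G.neighborFinset v then (1:ℕ) else 0) := by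
      refine Finset.sum_congr rfl fun s _ => ?_
      rw [expand]
      refine Finset.sum_congr rfl fun v _ => ?_
      by_cases hv : v ∈ s <;> simp [hv]
    rw [step1, Finset.sum_comm]
    refine Finset.sum_congr rfl fun v _ => ?_
    rw [← Finset.card_filter, hP3]
    rw [show (3:ℕ) = 2 + 1 from rfl]
    rw [card_insert_filter v (G.neighborFinset v) (by simp) 2,
      SimpleGraph.card_neighborFinset_eq_degree]
  -- sub-sum 4 : number of triples
  have h4 : P3.card = 220 := by
    rw [hP3, Finset.card_powersetCard, Finset.card_univ, hV]
    decide
  -- combine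
  have L : ∑ s ∈ P3, (2 * (if G.IsNClique 3 s then (1:ℕ) else 0)
        + 2 * (if Gᶜ.IsNClique 3 s then 1 else 0)
        + ∑ v ∈ s, ∑ w ∈ s, (if G.Adj v w then (1:ℕ) else 0))
      = 2 * (G.cliqueFinset 3).card + 2 * (Gᶜ.cliqueFinset 3).card + 600 := by
    rw [Finset.sum_add_distrib, Finset.sum_add_distrib, ← Finset.mul_sum, ← Finset.mul_sum,
      h1, h1c, h2]
  have R : ∑ s ∈ P3, (2 + 2 * ∑ v ∈ s, (if s.erase v ⊆ G.neighborFinset v then (1:ℕ) else 0))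
      = 440 + 2 * ∑ v : V, (G.degree v).choose 2 := by
    rw [Finset.sum_add_distrib, ← Finset.mul_sum, h3, Finset.sum_const, h4, smul_eq_mul]
  rw [L, R] at main
  omega
end
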